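/- Let (V, b) be a nondegenerate symmetric bilinear space over a field k of characteristic ≠ 2, W ⊆ O(V,b) a finite reflection group, and Δ ⊆ V a root system for W, i.e. a finite W-invariant set of anisotropic vectors such that {s_α | α ∈ Δ} is exactly the set of reflections in W. Suppose that for every x ∈ V with x ∉ ⋃_{α∈Δ} ker(b(·,α)), the stabilizer W_x = {w ∈ W | w(x) = x} is generated by the reflections it contains. Then ⋃_{α∈Δ} ker(b(·,α)) = ⋃_{w∈W, w≠id} ker(w - id_V). -/

import Mathlib

/-!
Since `s_α` fixes `x` exactly when `B α x = 0` and moves `α` itself, every point of a root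
hyperplane is fixed by a nontrivial element of `W`. Conversely, no reflection of `W` fixes a
point `x` off all root hyperplanes, so its stabilizer, being generated by such reflections,
is trivial.
-/

section Reflection

variable {k V : Type*} [Field k] [AddCommGroup V] [Module k V]
  {B : V →ₗ[k] V →ₗ[k] k} {α : V} {s : V → V}

theorem reflection_apply_eq_self_iff (h2 : (2 : k) ≠ 0) (hα : B α α ≠ 0)
    (hs : ∀ y : V, s y = y - ((2 * B α y) / (B α α)) • α) (x : V) :
    s x = x ↔ B α x = 0 := by
  have hα0 : α ≠ 0 := by rintro rfl; simp at hα
  rw [hs, sub_eq_self, smul_eq_zero]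
  simp [h2, hα, hα0]

theorem reflection_ne_one {s : V ≃ₗ[k] V} (h2 : (2 : k) ≠ 0) (hα : B α α ≠ 0)
    (hs : ∀ y : V, s y = y - ((2 * B α y) / (B α α)) • α) : s ≠ 1 := by
  rintro rfl
  exact hα ((reflection_apply_eq_self_iff h2 hα hs α).mp rfl)

end Reflection

theorem union_hyperplanes_eq_union_fixed_general {k V : Type*} [Field k] [AddCommGroup V] [Module k V]
    (h2 : (2 : k) ≠ 0)
    (B : V →ₗ[k] V →ₗ[k] k)
    (W : Subgroup (V ≃ₗ[k] V))
    (Δ : Set V)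
    (hani : ∀ α ∈ Δ, B α α ≠ 0)
    -- every root gives a reflection of `W`
    (hrefl : ∀ α ∈ Δ, ∃ s ∈ W, ∀ x : V, s x = x - ((2 * B α x) / (B α α)) • α)
    -- stabilizers of points off the root hyperplanes are generated by their reflections
    (hstab : ∀ x : V, (∀ α ∈ Δ, B α x ≠ 0) → ∀ w ∈ W, w x = x →
      w ∈ Subgroup.closure
        {s : V ≃ₗ[k] V | s ∈ W ∧ s x = x ∧
          ∃ α ∈ Δ, ∀ y : V, s y = y - ((2 * B α y) / (B α α)) • α}) :
    {x : V | ∃ α ∈ Δ, B α x = 0} =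
      {x : V | ∃ w ∈ W, w ≠ (1 : V ≃ₗ[k] V) ∧ w x = x} := by
  ext x
  simp only [Set.mem_ofPred_eq]
  constructor
  · rintro ⟨α, hαΔ, hαx⟩
    obtain ⟨s, hsW, hs⟩ := hrefl α hαΔ
    exact ⟨s, hsW, reflection_ne_one h2 (hani α hαΔ) hs,
      (reflection_apply_eq_self_iff h2 (hani α hαΔ) hs x).mpr hαx⟩
  · rintro ⟨w, hwW, hw1, hwx⟩
    by_contra! hoff
    have hno_refl : {s : V ≃ₗ[k] V | s ∈ W ∧ s x = x ∧
        ∃ α ∈ Δ, ∀ y : V, s y = y - ((2 * B α y) / (B α α)) • α} = ∅ := by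
      refine Set.eq_empty_of_forall_notMem ?_
      rintro s ⟨-, hsx, α, hαΔ, hs⟩
      exact hoff α hαΔ ((reflection_apply_eq_self_iff h2 (hani α hαΔ) hs x).mp hsx)
    have hw := hstab x hoff w hwW hwx
    rw [hno_refl, Subgroup.closure_empty, Subgroup.mem_bot] at hw
    exact hw1 hw

/-- For a finite orthogonal reflection group `W` with root system `Δ`, assuming the
Chevalley–Shephard–Todd–Bourbaki property that stabilizers of points outside all root
hyperplanes are generated by the reflections they contain, the union of the root
hyperplanes equals the union of the fixed spaces of the nontrivial elements of `W`. -/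
theorem union_hyperplanes_eq_union_fixed {k V : Type*} [Field k] [AddCommGroup V] [Module k V]
    [FiniteDimensional k V] (h2 : (2 : k) ≠ 0)
    (B : V →ₗ[k] V →ₗ[k] k)
    (hsymm : ∀ x y : V, B x y = B y x)
    (hnd : ∀ x : V, (∀ y : V, B x y = 0) → x = 0)
    (W : Subgroup (V ≃ₗ[k] V)) (hWfin : (W : Set (V ≃ₗ[k] V)).Finite)
    (hWO : ∀ w ∈ W, ∀ x y : V, B (w x) (w y) = B x y)
    (Δ : Set V) (hΔfin : Δ.Finite)
    (hani : ∀ α ∈ Δ, B α α ≠ 0)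
    (hWinv : ∀ w ∈ W, ∀ α ∈ Δ, w α ∈ Δ)
    -- every root gives a reflection of `W`
    (hrefl : ∀ α ∈ Δ, ∃ s ∈ W, ∀ x : V, s x = x - ((2 * B α x) / (B α α)) • α)
    -- every reflection of `W` comes from a root in `Δ`
    (hreflonly : ∀ s ∈ W,
      Module.finrank k ↥(LinearMap.range ((s : V →ₗ[k] V) - LinearMap.id)) = 1 →
      ∃ α ∈ Δ, ∀ x : V, s x = x - ((2 * B α x) / (B α α)) • α)
    -- `W` is generated by its reflections
    (hWgen : W ≤ Subgroup.closure
      {s : V ≃ₗ[k] V | s ∈ W ∧ ∃ α ∈ Δ, ∀ x : V, s x = x - ((2 * B α x) / (B α α)) • α})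
    -- stabilizers of points off the root hyperplanes are generated by their reflections
    (hstab : ∀ x : V, (∀ α ∈ Δ, B α x ≠ 0) → ∀ w ∈ W, w x = x →
      w ∈ Subgroup.closure
        {s : V ≃ₗ[k] V | s ∈ W ∧ s x = x ∧
          ∃ α ∈ Δ, ∀ y : V, s y = y - ((2 * B α y) / (B α α)) • α}) :
    {x : V | ∃ α ∈ Δ, B α x = 0} =
      {x : V | ∃ w ∈ W, w ≠ (1 : V ≃ₗ[k] V) ∧ w x = x} :=
  union_hyperplanes_eq_union_fixed_general h2 B W Δ hani hrefl hstab
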